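/- arXiv:2605.04184 — 3 statements merged into one kernel-verified Lean document; each statement's English description precedes it below -/
import Mathlib

section
/- Let $\mu=(\mu_n)_{n\in\mathbb{Z}^+}$ be a growth rate with $\mu_0=1$, $\lim_{n\to\infty}\mu_n=\infty$, and $\mu_{n+1}/\mu_n\leq\theta$ for some $\theta\geq1$, and let $\widetilde\mu$ be its piecewise linear interpolation with inverse $\widetilde\mu^{-1}:[1,\infty)\to[0,\infty)$. Then for each $n\in\mathbb{N}$, $\frac{\mu_{\lfloor\widetilde\mu^{-1}(e^n)\rfloor+1}}{\mu_{\lfloor\widetilde\mu^{-1}(e^{n-1})\rfloor+1}} \leq e\theta^2$. -/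
/-!
Write `m = ⌊μ̃⁻¹(eⁿ)⌋` and `k = ⌊μ̃⁻¹(eⁿ⁻¹)⌋`. Since `μ̃` interpolates a monotone sequence, its
value at `t` lies between `μ ⌊t⌋` and `μ (⌊t⌋ + 1)`; hence `μ m ≤ eⁿ` and `eⁿ⁻¹ ≤ μ (k + 1)`.
One step of the ratio bound gives `μ (m + 1) ≤ θ eⁿ = e θ eⁿ⁻¹ ≤ e θ μ (k + 1)`, and `θ ≤ θ²`.
-/

open Set

theorem Nat.mem_Icc_floor_floor_add_one {x : ℝ} (hx : 0 ≤ x) :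
    x ∈ Icc (⌊x⌋₊ : ℝ) (⌊x⌋₊ + 1) :=
  ⟨Nat.floor_le hx, (Nat.lt_floor_add_one x).le⟩

section Interpolation

variable {μ : ℕ → ℝ} {f : ℝ → ℝ} {x : ℝ}

theorem le_interp_at_floor (hmono : Monotone μ)
    (hf : ∀ n : ℕ, ∀ t ∈ Icc (n : ℝ) (n + 1), f t = μ n + (t - n) * (μ (n + 1) - μ n))
    (hx : 0 ≤ x) : μ ⌊x⌋₊ ≤ f x := by
  have hxI := Nat.mem_Icc_floor_floor_add_one hx
  have hstep : μ ⌊x⌋₊ ≤ μ (⌊x⌋₊ + 1) := hmono (Nat.le_succ _)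
  rw [hf _ x hxI]
  nlinarith [hxI.1]

theorem interp_le_at_floor_add_one (hmono : Monotone μ)
    (hf : ∀ n : ℕ, ∀ t ∈ Icc (n : ℝ) (n + 1), f t = μ n + (t - n) * (μ (n + 1) - μ n))
    (hx : 0 ≤ x) : f x ≤ μ (⌊x⌋₊ + 1) := by
  have hxI := Nat.mem_Icc_floor_floor_add_one hx
  have hstep : μ ⌊x⌋₊ ≤ μ (⌊x⌋₊ + 1) := hmono (Nat.le_succ _)
  rw [hf _ x hxI]
  nlinarith [hxI.2]

theorem at_floor_add_one_le_mul_interp {θ : ℝ} (hθ : 0 ≤ θ) (hpos : ∀ n, 0 < μ n)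
    (hmono : Monotone μ) (hratio : ∀ n, μ (n + 1) / μ n ≤ θ)
    (hf : ∀ n : ℕ, ∀ t ∈ Icc (n : ℝ) (n + 1), f t = μ n + (t - n) * (μ (n + 1) - μ n))
    (hx : 0 ≤ x) : μ (⌊x⌋₊ + 1) ≤ θ * f x :=
  calc μ (⌊x⌋₊ + 1) ≤ θ * μ ⌊x⌋₊ := (div_le_iff₀ (hpos _)).mp (hratio _)
    _ ≤ θ * f x := mul_le_mul_of_nonneg_left (le_interp_at_floor hmono hf hx) hθ

end Interpolation

theorem sampled_ratio_le_general (μ : ℕ → ℝ) (θ : ℝ) (hθ : 1 ≤ θ)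
    (hpos : ∀ n, 0 < μ n) (hmono : StrictMono μ)
    (hratio : ∀ n, μ (n + 1) / μ n ≤ θ)
    (f : ℝ → ℝ)
    (hf : ∀ n : ℕ, ∀ t ∈ Set.Icc (n : ℝ) (n + 1),
      f t = μ n + (t - n) * (μ (n + 1) - μ n))
    (g : ℝ → ℝ) (hg0 : ∀ s, 1 ≤ s → 0 ≤ g s)
    (hginv : ∀ s, 1 ≤ s → f (g s) = s) :
    ∀ n : ℕ, 1 ≤ n →
      μ (⌊g (Real.exp n)⌋₊ + 1) / μ (⌊g (Real.exp ((n : ℝ) - 1))⌋₊ + 1)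
        ≤ Real.exp 1 * θ ^ 2 := by
  intro n hn
  have hprev : 1 ≤ Real.exp ((n : ℝ) - 1) :=
    Real.one_le_exp (sub_nonneg.mpr (by exact_mod_cast hn))
  have hcur : 1 ≤ Real.exp n := Real.one_le_exp n.cast_nonneg
  have upper : μ (⌊g (Real.exp n)⌋₊ + 1) ≤ θ * Real.exp n := by
    simpa only [hginv _ hcur] using at_floor_add_one_le_mul_interp (by linarith) hpos
      hmono.monotone hratio hf (hg0 _ hcur)
  have lower : Real.exp ((n : ℝ) - 1) ≤ μ (⌊g (Real.exp ((n : ℝ) - 1))⌋₊ + 1) := by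
    simpa only [hginv _ hprev] using interp_le_at_floor_add_one hmono.monotone hf (hg0 _ hprev)
  rw [div_le_iff₀ (hpos _)]
  calc μ (⌊g (Real.exp n)⌋₊ + 1) ≤ θ * Real.exp n := upper
    _ = Real.exp 1 * θ * Real.exp ((n : ℝ) - 1) := by
        rw [mul_comm (Real.exp 1), mul_assoc, ← Real.exp_add, add_sub_cancel]
    _ ≤ Real.exp 1 * θ * μ (⌊g (Real.exp ((n : ℝ) - 1))⌋₊ + 1) := by gcongr
    _ ≤ Real.exp 1 * θ ^ 2 * μ (⌊g (Real.exp ((n : ℝ) - 1))⌋₊ + 1) := by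
        gcongr
        · exact (hpos _).le
        · nlinarith

/-- Control of the ratio of a growth rate sampled at the discretization points
`⌊μ̃⁻¹(eⁿ)⌋ + 1`. -/
theorem sampled_ratio_le (μ : ℕ → ℝ) (θ : ℝ) (hθ : 1 ≤ θ)
    (hpos : ∀ n, 0 < μ n) (hmono : StrictMono μ) (hμ0 : μ 0 = 1)
    (htop : Filter.Tendsto μ Filter.atTop Filter.atTop)
    (hratio : ∀ n, μ (n + 1) / μ n ≤ θ)
    (f : ℝ → ℝ)
    (hf : ∀ n : ℕ, ∀ t ∈ Set.Icc (n : ℝ) (n + 1),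
      f t = μ n + (t - n) * (μ (n + 1) - μ n))
    (g : ℝ → ℝ) (hg0 : ∀ s, 1 ≤ s → 0 ≤ g s)
    (hginv : ∀ s, 1 ≤ s → f (g s) = s) :
    ∀ n : ℕ, 1 ≤ n →
      μ (⌊g (Real.exp n)⌋₊ + 1) / μ (⌊g (Real.exp ((n : ℝ) - 1))⌋₊ + 1)
        ≤ Real.exp 1 * θ ^ 2 :=
  sampled_ratio_le_general μ θ hθ hpos hmono hratio f hf g hg0 hginv
end

section
/- Let $(A_n)_{n\in\mathbb{N}}$ be invertible operators on $\mathbb{R}^d$ with evolution family $\mathcal{A}(m,n)$ satisfying $\|\mathcal{A}(m,n)\| \leq K(\mu_m/\mu_n)^a$ for $m\geq n$, and let $g_n$ be $C^1$ maps with $\|Dg_n(x)\| \leq c\frac{\mu_{n+1}-\mu_n}{\mu_n}$ for all $x$. Let $G_n = A_n + g_n$ and $\mathcal{G}(m,n) = G_{m-1}\circ\cdots\circ G_n$ for $m>n$ (identity for $m=n$). Assume $\mu_{n+1}/\mu_n\leq\theta$ for some $\theta\geq1$. Then for all $m\geq n$ and $x\in\mathbb{R}^d$, $\|D\mathcal{G}(m,n)(x)\|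 \leq K(\mu_m/\mu_n)^{a+Kc\theta}$. -/
/-! Variation of constants writes `D𝒢(m,n)(x)` as `𝒜(m,n)` plus the sum of the terms
`𝒜(m,j+1) Dg_j D𝒢(j,n)`, so `u_m = ‖D𝒢(m,n)(x)‖` satisfies a Gronwall-type sum inequality.
The bound `K (μ_m/μ_n)^(a+b)`, `b = Kcθ`, is a supersolution of it: since `r - 1 ≤ θ log r`
for `1 ≤ r ≤ θ`, we have `Kc (r - 1) ≤ r^b - 1`, so each summand is at most `K (μ_m/μ_n)^a`
times the increment `(μ_{j+1}/μ_n)^b - (μ_j/μ_n)^b`, and these increments telescope.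
Strong induction on `m` concludes. -/

open Finset Real

section Variation

variable {𝕜 E : Type*} [NontriviallyNormedField 𝕜] [NormedAddCommGroup E] [NormedSpace 𝕜 E]
  {𝒜 : ℕ → ℕ → E →L[𝕜] E} {g G : ℕ → E → E} {𝒢 : ℕ → ℕ → E → E}

lemma hasFDerivAt_clm_add {n : ℕ} (hg : Differentiable 𝕜 (g n))
    (hG : ∀ x, G n x = 𝒜 (n + 1) n x + g n x) (y : E) :
    HasFDerivAt (G n) (𝒜 (n + 1) n + fderiv 𝕜 (g n) y) y := by
  rw [funext hG]
  exact (𝒜 (n + 1) n).hasFDerivAt.add (hg y).hasFDerivAt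

theorem hasFDerivAt_evolution_variation (h𝒜id : ∀ n, 𝒜 n n = ContinuousLinearMap.id 𝕜 E)
    (h𝒜cocycle : ∀ n k m, n ≤ k → k ≤ m → (𝒜 m k).comp (𝒜 k n) = 𝒜 m n)
    (hg : ∀ n, Differentiable 𝕜 (g n)) (hG : ∀ n x, G n x = 𝒜 (n + 1) n x + g n x)
    (h𝒢id : ∀ n, 𝒢 n n = id) (h𝒢rec : ∀ n m, n ≤ m → 𝒢 (m + 1) n = G m ∘ 𝒢 m n)
    {n m : ℕ} (hnm : n ≤ m) (x : E) :
    HasFDerivAt (𝒢 m n) (𝒜 m n + ∑ j ∈ Ico n m,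
      (𝒜 m (j + 1)).comp ((fderiv 𝕜 (g j) (𝒢 j n x)).comp (fderiv 𝕜 (𝒢 j n) x))) x := by
  induction m, hnm using Nat.le_induction with
  | base => simpa [h𝒢id, h𝒜id] using hasFDerivAt_id x
  | succ m hm ih =>
    rw [h𝒢rec n m hm]
    convert (hasFDerivAt_clm_add (hg m) (hG m) (𝒢 m n x)).comp x ih using 1
    rw [sum_Ico_succ_top hm, h𝒜id, ContinuousLinearMap.id_comp, ih.fderiv,
      ContinuousLinearMap.add_comp, ContinuousLinearMap.comp_add (𝒜 (m + 1) m),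
      ContinuousLinearMap.comp_finsetSum, h𝒜cocycle n m (m + 1) hm m.le_succ, add_assoc]
    congr 2
    refine sum_congr rfl fun j hj => ?_
    rw [← h𝒜cocycle (j + 1) m (m + 1) (mem_Ico.1 hj).2 m.le_succ]
    rfl

end Variation

lemma mul_sub_one_le_rpow_mul_sub_one {κ θ r : ℝ} (hκ : 0 ≤ κ) (hr : 1 ≤ r) (hrθ : r ≤ θ) :
    κ * (r - 1) ≤ r ^ (κ * θ) - 1 := by
  have hr₀ : 0 < r := one_pos.trans_le hr
  have hlog : r - 1 ≤ θ * log r :=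
    calc r - 1 = r * (1 - r⁻¹) := by field_simp
      _ ≤ r * log r := by gcongr; exact one_sub_inv_le_log_of_pos hr₀
      _ ≤ θ * log r := by gcongr; exact log_nonneg hr
  have hexp : κ * θ * log r + 1 ≤ r ^ (κ * θ) := by
    rw [rpow_def_of_pos hr₀, mul_comm (log r)]
    exact add_one_le_exp _
  linarith [mul_le_mul_of_nonneg_left hlog hκ]

lemma rpow_div_mul_rpow_div_le {a p q s t : ℝ} (ha : 0 ≤ a) (hp : 0 < p) (hpq : p ≤ q)
    (hs : 0 < s) (ht : 0 < t) : (s / q) ^ a * (p / t) ^ a ≤ (s / t) ^ a := by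
  have hq : 0 < q := hp.trans_le hpq
  rw [← mul_rpow (by positivity) (by positivity)]
  gcongr
  rw [div_mul_div_comm, div_le_div_iff₀ (by positivity) ht]
  nlinarith [mul_le_mul_of_nonneg_left hpq (mul_pos hs ht).le]

lemma mul_sub_div_mul_rpow_le {κ θ p q t : ℝ} (hκ : 0 ≤ κ) (hp : 0 < p) (hpq : p ≤ q)
    (hqp : q / p ≤ θ) (ht : 0 < t) :
    κ * ((q - p) / p) * (p / t) ^ (κ * θ) ≤ (q / t) ^ (κ * θ) - (p / t) ^ (κ * θ) := by
  have hq : 0 < q := hp.trans_le hpq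
  have hsplit : (q / t) ^ (κ * θ) = (q / p) ^ (κ * θ) * (p / t) ^ (κ * θ) := by
    rw [← mul_rpow (by positivity) (by positivity), div_mul_div_cancel₀ hp.ne']
  rw [hsplit, ← sub_one_mul, sub_div, div_self hp.ne']
  gcongr
  exact mul_sub_one_le_rpow_mul_sub_one hκ ((one_le_div hp).2 hpq) hqp

lemma discrete_gronwall_rpow_step {K a c θ p q s t u : ℝ} (hK : 0 ≤ K) (ha : 0 ≤ a) (hc : 0 ≤ c)
    (hp : 0 < p) (hpq : p ≤ q) (hqp : q / p ≤ θ) (hs : 0 < s) (ht : 0 < t)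
    (hu : u ≤ K * (p / t) ^ (a + K * c * θ)) :
    K * (s / q) ^ a * (c * ((q - p) / p) * u) ≤
      K * (s / t) ^ a * ((q / t) ^ (K * c * θ) - (p / t) ^ (K * c * θ)) := by
  have hq : 0 < q := hp.trans_le hpq
  calc K * (s / q) ^ a * (c * ((q - p) / p) * u)
      ≤ K * (s / q) ^ a * (c * ((q - p) / p) * (K * (p / t) ^ (a + K * c * θ))) := by gcongr
    _ = K * ((s / q) ^ a * (p / t) ^ a) * (K * c * ((q - p) / p) * (p / t) ^ (K * c * θ)) := by
      rw [rpow_add (by positivity)]; ring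
    _ ≤ K * (s / t) ^ a * ((q / t) ^ (K * c * θ) - (p / t) ^ (K * c * θ)) := by
      gcongr
      · exact rpow_div_mul_rpow_div_le ha hp hpq hs ht
      · exact mul_sub_div_mul_rpow_le (mul_nonneg hK hc) hp hpq hqp ht

lemma discrete_gronwall_rpow {K a c θ : ℝ} (hK : 0 ≤ K) (ha : 0 ≤ a) (hc : 0 ≤ c) {μ : ℕ → ℝ}
    (hpos : ∀ n, 0 < μ n) (hmono : Monotone μ) (hratio : ∀ n, μ (n + 1) / μ n ≤ θ)
    {n : ℕ} {u : ℕ → ℝ}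
    (hu : ∀ m, n ≤ m → u m ≤ K * (μ m / μ n) ^ a +
      ∑ j ∈ Ico n m, K * (μ m / μ (j + 1)) ^ a * (c * ((μ (j + 1) - μ j) / μ j) * u j)) :
    ∀ m, n ≤ m → u m ≤ K * (μ m / μ n) ^ (a + K * c * θ) := by
  intro m
  induction m using Nat.strong_induction_on with
  | _ m ih =>
  intro hnm
  calc u m ≤ K * (μ m / μ n) ^ a +
        ∑ j ∈ Ico n m, K * (μ m / μ (j + 1)) ^ a * (c * ((μ (j + 1) - μ j) / μ j) * u j) :=
        hu m hnm
    _ ≤ K * (μ m / μ n) ^ a + ∑ j ∈ Ico n m,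
        K * (μ m / μ n) ^ a * ((μ (j + 1) / μ n) ^ (K * c * θ) - (μ j / μ n) ^ (K * c * θ)) := by
      gcongr K * (μ m / μ n) ^ a + ∑ j ∈ Ico n m, ?_ with j hj
      obtain ⟨hnj, hjm⟩ := mem_Ico.1 hj
      exact discrete_gronwall_rpow_step hK ha hc (hpos j) (hmono (Nat.le_succ j)) (hratio j)
        (hpos m) (hpos n) (ih j hjm hnj)
    _ = K * (μ m / μ n) ^ (a + K * c * θ) := by
      rw [← mul_sum, sum_Ico_sub (fun j => (μ j / μ n) ^ (K * c * θ)) hnm,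
        div_self (hpos n).ne', one_rpow, rpow_add (div_pos (hpos m) (hpos n))]
      ring

theorem deriv_nonlinear_evolution_bound_general (d : ℕ) (K a c θ : ℝ) (hK : 0 < K)
    (ha : 0 < a) (hc : 0 < c)
    (μ : ℕ → ℝ) (hpos : ∀ n, 0 < μ n) (hmono : StrictMono μ)
    (hratio : ∀ n, μ (n + 1) / μ n ≤ θ)
    (𝒜 : ℕ → ℕ → EuclideanSpace ℝ (Fin d) →L[ℝ] EuclideanSpace ℝ (Fin d))
    (h𝒜id : ∀ n, 𝒜 n n = ContinuousLinearMap.id ℝ _)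
    (h𝒜cocycle : ∀ n k m, n ≤ k → k ≤ m → (𝒜 m k).comp (𝒜 k n) = 𝒜 m n)
    (h𝒜norm : ∀ n m, n ≤ m → ‖𝒜 m n‖ ≤ K * (μ m / μ n) ^ a)
    (g : ℕ → EuclideanSpace ℝ (Fin d) → EuclideanSpace ℝ (Fin d))
    (hgdiff : ∀ n, ContDiff ℝ 1 (g n))
    (hgderiv : ∀ n x, ‖fderiv ℝ (g n) x‖ ≤ c * ((μ (n + 1) - μ n) / μ n))
    (G : ℕ → EuclideanSpace ℝ (Fin d) → EuclideanSpace ℝ (Fin d))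
    (hG : ∀ n x, G n x = 𝒜 (n + 1) n x + g n x)
    (𝒢 : ℕ → ℕ → EuclideanSpace ℝ (Fin d) → EuclideanSpace ℝ (Fin d))
    (h𝒢id : ∀ n, 𝒢 n n = id)
    (h𝒢rec : ∀ n m, n ≤ m → 𝒢 (m + 1) n = G m ∘ 𝒢 m n) :
    ∀ n m, n ≤ m → ∀ x,
      ‖fderiv ℝ (𝒢 m n) x‖ ≤ K * (μ m / μ n) ^ (a + K * c * θ) := by
  intro n m hnm x
  refine discrete_gronwall_rpow hK.le ha.le hc.le hpos hmono.monotone hratio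
    (u := fun m => ‖fderiv ℝ (𝒢 m n) x‖) (fun m hm => ?_) m hnm
  have hvariation := hasFDerivAt_evolution_variation h𝒜id h𝒜cocycle
    (fun n => (hgdiff n).differentiable one_ne_zero) hG h𝒢id h𝒢rec hm x
  rw [hvariation.fderiv]
  refine (norm_add_le _ _).trans (add_le_add (h𝒜norm n m hm) ?_)
  refine (norm_sum_le _ _).trans (sum_le_sum fun j hj => ?_)
  calc _ ≤ ‖𝒜 m (j + 1)‖ * (‖fderiv ℝ (g j) (𝒢 j n x)‖ * ‖fderiv ℝ (𝒢 j n) x‖) :=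
        (ContinuousLinearMap.opNorm_comp_le _ _).trans
          (by gcongr; exact ContinuousLinearMap.opNorm_comp_le _ _)
    _ ≤ _ :=
      mul_le_mul (h𝒜norm (j + 1) m (mem_Ico.1 hj).2)
        (mul_le_mul_of_nonneg_right (hgderiv j _) (norm_nonneg _))
        (mul_nonneg (norm_nonneg _) (norm_nonneg _))
        (mul_nonneg hK.le (rpow_nonneg (div_pos (hpos m) (hpos _)).le _))

/-- Bound on the derivative of the nonlinear evolution family `𝒢(m,n)`. -/
theorem deriv_nonlinear_evolution_bound (d : ℕ) (K a c θ : ℝ) (hK : 0 < K)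
    (ha : 0 < a) (hc : 0 < c) (hθ : 1 ≤ θ)
    (μ : ℕ → ℝ) (hpos : ∀ n, 0 < μ n) (hmono : StrictMono μ)
    (hratio : ∀ n, μ (n + 1) / μ n ≤ θ)
    (𝒜 : ℕ → ℕ → EuclideanSpace ℝ (Fin d) →L[ℝ] EuclideanSpace ℝ (Fin d))
    (h𝒜id : ∀ n, 𝒜 n n = ContinuousLinearMap.id ℝ _)
    (h𝒜cocycle : ∀ n k m, n ≤ k → k ≤ m → (𝒜 m k).comp (𝒜 k n) = 𝒜 m n)
    (h𝒜norm : ∀ n m, n ≤ m → ‖𝒜 m n‖ ≤ K * (μ m / μ n) ^ a)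
    (g : ℕ → EuclideanSpace ℝ (Fin d) → EuclideanSpace ℝ (Fin d))
    (hgdiff : ∀ n, ContDiff ℝ 1 (g n))
    (hgderiv : ∀ n x, ‖fderiv ℝ (g n) x‖ ≤ c * ((μ (n + 1) - μ n) / μ n))
    (G : ℕ → EuclideanSpace ℝ (Fin d) → EuclideanSpace ℝ (Fin d))
    (hG : ∀ n x, G n x = 𝒜 (n + 1) n x + g n x)
    (𝒢 : ℕ → ℕ → EuclideanSpace ℝ (Fin d) → EuclideanSpace ℝ (Fin d))
    (h𝒢id : ∀ n, 𝒢 n n = id)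
    (h𝒢rec : ∀ n m, n ≤ m → 𝒢 (m + 1) n = G m ∘ 𝒢 m n) :
    ∀ n m, n ≤ m → ∀ x,
      ‖fderiv ℝ (𝒢 m n) x‖ ≤ K * (μ m / μ n) ^ (a + K * c * θ) :=
  deriv_nonlinear_evolution_bound_general d K a c θ hK ha hc μ hpos hmono hratio 𝒜 h𝒜id h𝒜cocycle
    h𝒜norm g hgdiff hgderiv G hG 𝒢 h𝒢id h𝒢rec
end

section
/- Let $T(t,s)$ be an evolution family on $\mathbb{R}^d$ (i.e., $T(t,t)=\mathrm{Id}$, $T(t,s)T(s,r)=T(t,r)$, and each $T(t,s)$ is invertible with $T(t,s)^{-1}=T(s,t)$), defined for $t,s\geq 1$. Suppose the sequence $A_n := T(n+1,n)$, $n\in\mathbb{N}$, admits a strong $\mu$-dichotomy with projections $P_n$, constants $K>0$, $a\geq\lambda>0$, for a growth rate $\mu:[1,\infty)\to(0,\infty)$ satisfying $\mu(t+1)/\mu(t)\leq\theta$ for some $\theta\geq1$, and that $\|T(t,s)\|\leq K(\mu(t)/\mu(s))^a$ and $\|T(s,t)\|\leq K(\mu(t)/\mu(s))^a$ for $t\geq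 s\geq 1$. Define $P(t) := T(t,n)P_nT(n,t)$ for $t\in[n,n+1)$. Then for all $t\geq s\geq 1$: (i) $P(t)T(t,s)=T(t,s)P(s)$; (ii) $\|T(t,s)P(s)\| \leq K^3\theta^{2a+\lambda}(\mu(t)/\mu(s))^{-\lambda}$. -/
/-!
Write `n = ⌊t⌋₊` and `m = ⌊s⌋₊`. The cocycle law factors `T(t,s)P(s)` as
`T(t,n) (T(n,m)P_m) T(m,s)` and reduces `P(t)T(t,s) = T(t,s)P(s)` to the discrete invariance
`P_n T(n,m) = T(n,m)P_m`. The middle factor is bounded by the discrete dichotomy, the outer two by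
the growth bound over a time step shorter than `1`, over which `μ` grows at most by the factor `θ`;
this costs `θ^a` twice, and `θ^lam` once more when `μ(n)/μ(m)` is replaced by `μ(t)/μ(s)`.
-/

open Set ContinuousLinearMap

section EvolutionFamily

variable {E : Type*} [NormedAddCommGroup E] [NormedSpace ℝ E] {T : ℝ → ℝ → E →L[ℝ] E}

theorem comp_evolution_comm_of_natCast_le {P : ℕ → E →L[ℝ] E}
    (hTid : ∀ t, 1 ≤ t → T t t = ContinuousLinearMap.id ℝ E)
    (hT : ∀ t s r, 1 ≤ r → 1 ≤ s → 1 ≤ t → (T t s).comp (T s r) = T t r)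
    (hPcomm : ∀ n : ℕ, 1 ≤ n → (T (n + 1) n).comp (P n) = (P (n + 1)).comp (T (n + 1) n))
    {m n : ℕ} (hm : 1 ≤ m) (hmn : m ≤ n) : (P n).comp (T n m) = (T n m).comp (P m) := by
  have hm' : (1 : ℝ) ≤ m := by exact_mod_cast hm
  induction n, hmn using Nat.le_induction with
  | base => rw [hTid m hm', id_comp, comp_id]
  | succ k hk ih =>
    have hk' : (1 : ℝ) ≤ k := hm'.trans (by exact_mod_cast hk)
    rw [Nat.cast_succ, ← hT _ k _ hm' hk' (by linarith), ← comp_assoc, ← hPcomm k (hm.trans hk),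
      comp_assoc, ih, comp_assoc]

theorem evolution_comp_conj_eq
    (hT : ∀ t s r, 1 ≤ r → 1 ≤ s → 1 ≤ t → (T t s).comp (T s r) = T t r)
    {t s m n : ℝ} (ht : 1 ≤ t) (hs : 1 ≤ s) (hm : 1 ≤ m) (hn : 1 ≤ n) (Q : E →L[ℝ] E) :
    (T t s).comp ((T s m).comp (Q.comp (T m s))) =
      (T t n).comp (((T n m).comp Q).comp (T m s)) := by
  rw [← comp_assoc, hT t s m hm hs ht, ← hT t n m hm hn ht]
  simp only [comp_assoc]

theorem conj_comp_evolution_eq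
    (hT : ∀ t s r, 1 ≤ r → 1 ≤ s → 1 ≤ t → (T t s).comp (T s r) = T t r)
    {t s m n : ℝ} (ht : 1 ≤ t) (hs : 1 ≤ s) (hm : 1 ≤ m) (hn : 1 ≤ n) {Qm Qn : E →L[ℝ] E}
    (hQ : Qn.comp (T n m) = (T n m).comp Qm) :
    ((T t n).comp (Qn.comp (T n t))).comp (T t s) =
      (T t s).comp ((T s m).comp (Qm.comp (T m s))) := by
  rw [evolution_comp_conj_eq hT ht hs hm hn, ← hQ, comp_assoc, comp_assoc, comp_assoc,
    hT n m s hs hm hn, hT n t s hs ht hn]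

end EvolutionFamily

theorem MonotoneOn.apply_le_mul_of_le_add_one {μ : ℝ → ℝ} {θ n t : ℝ}
    (hμmono : MonotoneOn μ (Ici 1)) (hμratio : μ (n + 1) / μ n ≤ θ) (hn : 1 ≤ n) (hμn : 0 < μ n)
    (hnt : n ≤ t) (htn : t ≤ n + 1) : μ t ≤ θ * μ n := by
  have := hμmono (hn.trans hnt) (show 1 ≤ n + 1 by linarith) htn
  rw [div_le_iff₀ hμn] at hμratio
  linarith

theorem div_rpow_le_rpow_of_le_mul {x u θ a : ℝ} (hx : 0 ≤ x) (hu : 0 < u) (hxu : x ≤ θ * u)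
    (ha : 0 ≤ a) : (x / u) ^ a ≤ θ ^ a :=
  Real.rpow_le_rpow (div_nonneg hx hu.le) ((div_le_iff₀ hu).2 hxu) ha

theorem div_rpow_neg_le {x y u v θ lam : ℝ} (hx : 0 < x) (hu : 0 < u) (hv : 0 < v)
    (hvy : v ≤ y) (hxu : x ≤ θ * u) (hθ : 0 ≤ θ) (hlam : 0 ≤ lam) :
    (u / v) ^ (-lam) ≤ θ ^ lam * (x / y) ^ (-lam) := by
  have hy : 0 < y := hv.trans_le hvy
  have hbase : v / u ≤ θ * (y / x) := by
    rw [div_le_iff₀ hu, mul_div_assoc', div_mul_eq_mul_div, le_div_iff₀ hx]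
    nlinarith
  rw [Real.rpow_neg_eq_inv_rpow, Real.rpow_neg_eq_inv_rpow, inv_div, inv_div,
    ← Real.mul_rpow hθ (div_nonneg hy.le hx.le)]
  exact Real.rpow_le_rpow (div_nonneg hv.le hu.le) hbase hlam

theorem norm_comp_comp_le_of_ratio_le {E : Type*} [NormedAddCommGroup E] [NormedSpace ℝ E]
    {A B C : E →L[ℝ] E} {K a lam θ x y u v : ℝ} (hK : 0 ≤ K) (ha : 0 ≤ a) (hlam : 0 ≤ lam)
    (hθ : 0 < θ) (hx : 0 < x) (hu : 0 < u) (hv : 0 < v) (hxu : x ≤ θ * u)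
    (hvy : v ≤ y) (hyv : y ≤ θ * v)
    (hA : ‖A‖ ≤ K * (x / u) ^ a) (hB : ‖B‖ ≤ K * (u / v) ^ (-lam)) (hC : ‖C‖ ≤ K * (y / v) ^ a) :
    ‖A.comp (B.comp C)‖ ≤ K ^ 3 * θ ^ (2 * a + lam) * (x / y) ^ (-lam) := by
  have hy : 0 ≤ y := hv.le.trans hvy
  calc ‖A.comp (B.comp C)‖ ≤ ‖A‖ * (‖B‖ * ‖C‖) :=
        (opNorm_comp_le _ _).trans (by gcongr; exact opNorm_comp_le _ _)
    _ ≤ (K * θ ^ a) * ((K * (θ ^ lam * (x / y) ^ (-lam))) * (K * θ ^ a)) := by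
        gcongr
        · exact hA.trans (mul_le_mul_of_nonneg_left (div_rpow_le_rpow_of_le_mul hx.le hu hxu ha) hK)
        · exact hB.trans
            (mul_le_mul_of_nonneg_left (div_rpow_neg_le hx hu hv hvy hxu hθ.le hlam) hK)
        · exact hC.trans (mul_le_mul_of_nonneg_left (div_rpow_le_rpow_of_le_mul hy hv hyv ha) hK)
    _ = K ^ 3 * θ ^ (2 * a + lam) * (x / y) ^ (-lam) := by
        rw [show 2 * a + lam = a + (lam + a) by ring, Real.rpow_add hθ, Real.rpow_add hθ]
        ring

theorem one_le_natFloor_and_mem_Ico {t : ℝ} (ht : 1 ≤ t) :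
    1 ≤ ⌊t⌋₊ ∧ t ∈ Ico (⌊t⌋₊ : ℝ) (⌊t⌋₊ + 1) :=
  ⟨Nat.le_floor (by simpa using ht), Nat.floor_le (by linarith), Nat.lt_floor_add_one t⟩

open Real in
theorem dichotomy_discretization_lifts_general (d : ℕ) (K lam a θ : ℝ)
    (hK : 0 < K) (hlam : 0 < lam) (hla : lam ≤ a) (hθ : 1 ≤ θ)
    (μ : ℝ → ℝ) (hμpos : ∀ t, 1 ≤ t → 0 < μ t)
    (hμmono : StrictMonoOn μ (Set.Ici 1))
    (hμratio : ∀ t, 1 ≤ t → μ (t + 1) / μ t ≤ θ)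
    (T : ℝ → ℝ → EuclideanSpace ℝ (Fin d) →L[ℝ] EuclideanSpace ℝ (Fin d))
    (hTid : ∀ t, 1 ≤ t → T t t = ContinuousLinearMap.id ℝ _)
    (hTcocycle : ∀ t s r, 1 ≤ r → 1 ≤ s → 1 ≤ t →
      (T t s).comp (T s r) = T t r)
    (hTgrow : ∀ t s, 1 ≤ s → s ≤ t →
      ‖T t s‖ ≤ K * (μ t / μ s) ^ a ∧ ‖T s t‖ ≤ K * (μ t / μ s) ^ a)
    (P : ℕ → EuclideanSpace ℝ (Fin d) →L[ℝ] EuclideanSpace ℝ (Fin d))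
    (hPcomm : ∀ n : ℕ, 1 ≤ n →
      (T (n + 1) n).comp (P n) = (P (n + 1)).comp (T (n + 1) n))
    (hPs : ∀ m n : ℕ, 1 ≤ n → n ≤ m →
      ‖(T m n).comp (P n)‖ ≤ K * (μ m / μ n) ^ (-lam))
    (Pt : ℝ → EuclideanSpace ℝ (Fin d) →L[ℝ] EuclideanSpace ℝ (Fin d))
    (hPt : ∀ n : ℕ, 1 ≤ n → ∀ t ∈ Set.Ico (n : ℝ) (n + 1),
      Pt t = (T t n).comp ((P n).comp (T n t))) :
    ∀ t s : ℝ, 1 ≤ s → s ≤ t →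
      (Pt t).comp (T t s) = (T t s).comp (Pt s) ∧
      ‖(T t s).comp (Pt s)‖ ≤ K ^ 3 * θ ^ (2 * a + lam) * (μ t / μ s) ^ (-lam) := by
  intro t s hs hst
  have ht : 1 ≤ t := hs.trans hst
  set n := ⌊t⌋₊
  set m := ⌊s⌋₊
  obtain ⟨hn, hnt, htn⟩ := one_le_natFloor_and_mem_Ico ht
  obtain ⟨hm, hms, hsm⟩ := one_le_natFloor_and_mem_Ico hs
  have hn' : (1 : ℝ) ≤ n := by exact_mod_cast hn
  have hm' : (1 : ℝ) ≤ m := by exact_mod_cast hm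
  have hmn : m ≤ n := Nat.floor_le_floor hst
  rw [hPt n hn t ⟨hnt, htn⟩, hPt m hm s ⟨hms, hsm⟩]
  refine ⟨conj_comp_evolution_eq hTcocycle ht hs hm' hn'
    (comp_evolution_comm_of_natCast_le hTid hTcocycle hPcomm hm hmn), ?_⟩
  rw [evolution_comp_conj_eq hTcocycle ht hs hm' hn']
  have hμ : MonotoneOn μ (Ici 1) := hμmono.monotoneOn
  exact norm_comp_comp_le_of_ratio_le hK.le (hlam.le.trans hla) hlam.le (by linarith)
    (hμpos t ht) (hμpos n hn') (hμpos m hm')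
    (hμ.apply_le_mul_of_le_add_one (hμratio n hn') hn' (hμpos n hn') hnt htn.le)
    (hμ hm' hs hms)
    (hμ.apply_le_mul_of_le_add_one (hμratio m hm') hm' (hμpos m hm') hms hsm.le)
    (hTgrow t n hn' hnt).1 (hPs n m hm hmn) (hTgrow s m hm' hms).2

open Real in
/-- A strong `μ`-dichotomy of the discretization lifts to the continuous-time
evolution family (Proposition 5.3). -/
theorem dichotomy_discretization_lifts (d : ℕ) (K lam a θ : ℝ)
    (hK : 0 < K) (hlam : 0 < lam) (hla : lam ≤ a) (hθ : 1 ≤ θ)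
    (μ : ℝ → ℝ) (hμpos : ∀ t, 1 ≤ t → 0 < μ t)
    (hμmono : StrictMonoOn μ (Set.Ici 1))
    (hμratio : ∀ t, 1 ≤ t → μ (t + 1) / μ t ≤ θ)
    (T : ℝ → ℝ → EuclideanSpace ℝ (Fin d) →L[ℝ] EuclideanSpace ℝ (Fin d))
    (hTid : ∀ t, 1 ≤ t → T t t = ContinuousLinearMap.id ℝ _)
    (hTcocycle : ∀ t s r, 1 ≤ r → 1 ≤ s → 1 ≤ t →
      (T t s).comp (T s r) = T t r)
    (hTgrow : ∀ t s, 1 ≤ s → s ≤ t →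
      ‖T t s‖ ≤ K * (μ t / μ s) ^ a ∧ ‖T s t‖ ≤ K * (μ t / μ s) ^ a)
    (P : ℕ → EuclideanSpace ℝ (Fin d) →L[ℝ] EuclideanSpace ℝ (Fin d))
    (hPproj : ∀ n : ℕ, 1 ≤ n → (P n).comp (P n) = P n)
    (hPcomm : ∀ n : ℕ, 1 ≤ n →
      (T (n + 1) n).comp (P n) = (P (n + 1)).comp (T (n + 1) n))
    (hPs : ∀ m n : ℕ, 1 ≤ n → n ≤ m →
      ‖(T m n).comp (P n)‖ ≤ K * (μ m / μ n) ^ (-lam))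
    (hPu : ∀ m n : ℕ, 1 ≤ n → n ≤ m →
      ‖(T n m).comp (ContinuousLinearMap.id ℝ _ - P m)‖ ≤ K * (μ m / μ n) ^ (-lam))
    (Pt : ℝ → EuclideanSpace ℝ (Fin d) →L[ℝ] EuclideanSpace ℝ (Fin d))
    (hPt : ∀ n : ℕ, 1 ≤ n → ∀ t ∈ Set.Ico (n : ℝ) (n + 1),
      Pt t = (T t n).comp ((P n).comp (T n t))) :
    ∀ t s : ℝ, 1 ≤ s → s ≤ t →
      (Pt t).comp (T t s) = (T t s).comp (Pt s) ∧
      ‖(T t s).comp (Pt s)‖ ≤ K ^ 3 * θ ^ (2 * a + lam) * (μ t / μ s) ^ (-lam) :=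
  dichotomy_discretization_lifts_general d K lam a θ hK hlam hla hθ μ hμpos hμmono hμratio T hTid
    hTcocycle hTgrow P hPcomm hPs Pt hPt
end
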